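/- Every complete multipartite graph with at least two vertices is an undirected Fitch graph; that is, for every complete multipartite graph G with at least two vertices there exists a finite tree T with a {0,1}-edge-labeling λ such that the Fitch graph explained by (T, λ) is isomorphic to G. -/

import Mathlib

open SimpleGraph

/-- A leaf of a graph is a vertex with exactly one neighbour (i.e. a vertex of degree 1). -/
def SimpleGraph.IsLeaf {V : Type*} (T : SimpleGraph V) (v : V) : Prop :=
  ∃! u, T.Adj v u

/-- The undirected Fitch graph explained by an edge-labelled tree `(T, lam)`
(labels: `true` = 1, `false` = 0): its vertices are the leaves of `T`, and two
distinct leaves are adjacent iff the (unique) path between them in `T` contains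
at least one edge labelled `1`. -/
def fitchGraph {V : Type*} (T : SimpleGraph V) (lam : Sym2 V → Bool) :
    SimpleGraph {v : V // T.IsLeaf v} where
  Adj x y := x ≠ y ∧ ∃ p : T.Walk x.1 y.1, p.IsPath ∧ ∃ e ∈ p.edges, lam e = true
  symm := by
    refine ⟨?_⟩
    rintro x y ⟨hxy, p, hp, e, he, hl⟩
    exact ⟨hxy.symm, p.reverse, hp.reverse, e, by
      rw [SimpleGraph.Walk.edges_reverse]; exact List.mem_reverse.mpr he, hl⟩
  loopless := by refine ⟨?_⟩; rintro x ⟨hx, -⟩; exact hx rfl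

/-- A graph is an undirected Fitch graph if it is isomorphic to the Fitch graph
explained by some edge-labelled finite tree. -/
def IsFitchGraph {W : Type*} (G : SimpleGraph W) : Prop :=
  ∃ (V : Type) (T : SimpleGraph V) (lam : Sym2 V → Bool),
    Finite V ∧ T.IsTree ∧ Nonempty (G ≃g fitchGraph T lam)

/-- A graph is complete multipartite if its vertex set can be partitioned into
nonempty independent parts such that two vertices are adjacent iff they lie in
different parts. -/
def IsCompleteMultipartite' {W : Type*} (G : SimpleGraph W) : Prop :=
  ∃ P : Set (Set W), (∀ p ∈ P, p.Nonempty) ∧ (∀ x : W, ∃! p, p ∈ P ∧ x ∈ p) ∧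
    ∀ x y : W, G.Adj x y ↔ ∃ p ∈ P, ∃ q ∈ P, p ≠ q ∧ x ∈ p ∧ y ∈ q

/-! Write `G` as the pullback `x ~ y ↔ π x ≠ π y` of a complete graph along the map `π` sending
a vertex to its part. Take a star on the parts and hang each vertex `x` as a pendant leaf below
`π x`, labelling exactly the star edges `1`. The path between leaves `x` and `y` is
`x, π x, y` when `π x = π y` and `x, π x, …, π y, y` otherwise, so it carries a `1`-edge iff
`π x ≠ π y`. Surjectivity of `π` and `|W| ≥ 2` ensure that no part vertex is a leaf. -/

namespace SimpleGraph

variable {V W : Type*} (H : SimpleGraph V) (f : W → V)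

def addPendants : SimpleGraph (W ⊕ V) where
  Adj
    | .inl _, .inl _ => False
    | .inl w, .inr v => f w = v
    | .inr v, .inl w => f w = v
    | .inr u, .inr v => H.Adj u v
  symm := ⟨by
    rintro (a | a) (b | b) h
    exacts [h, h, h, h.symm]⟩
  loopless := ⟨by
    rintro (a | a) h
    exacts [h, H.loopless.irrefl a h]⟩

@[simp] lemma addPendants_adj_inl_inl {w w' : W} : ¬ (H.addPendants f).Adj (.inl w) (.inl w') :=
  id

@[simp] lemma addPendants_adj_inl_inr {w : W} {v : V} :
    (H.addPendants f).Adj (.inl w) (.inr v) ↔ f w = v := .rfl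

@[simps]
def addPendantsInr : H →g H.addPendants f := ⟨Sum.inr, id⟩

lemma isLeaf_addPendants_inl (w : W) : (H.addPendants f).IsLeaf (.inl w) :=
  ⟨.inr (f w), rfl, by rintro (u | u) h; exacts [h.elim, congrArg _ (Eq.symm h)]⟩

variable {H f}

lemma not_isLeaf_addPendants_inr [Nontrivial W] (hH : H.Connected) (hf : f.Surjective) (v : V) :
    ¬ (H.addPendants f).IsLeaf (.inr v) := by
  intro hleaf
  obtain ⟨w, rfl⟩ := hf v
  rcases subsingleton_or_nontrivial V with hV | hV
  · obtain ⟨w', hw'⟩ := exists_ne w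
    have hadj : (H.addPendants f).Adj (.inr (f w)) (.inl w') := Subsingleton.elim _ _
    exact hw' (Sum.inl_injective (ExistsUnique.unique hleaf hadj rfl))
  · obtain ⟨u, hu⟩ := hH.preconnected.exists_adj_of_nontrivial (f w)
    have hadj : (H.addPendants f).Adj (.inr (f w)) (.inl w) := rfl
    exact Sum.inl_ne_inr (ExistsUnique.unique hleaf hadj hu)

lemma Connected.addPendants (hH : H.Connected) : (H.addPendants f).Connected := by
  obtain ⟨v₀⟩ := hH.nonempty
  refine (connected_iff_exists_forall_reachable _).mpr ⟨.inr v₀, ?_⟩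
  rintro (w | v)
  · exact ((hH v₀ (f w)).map (H.addPendantsInr f)).trans (Adj.reachable rfl).symm
  · exact (hH v₀ v).map (H.addPendantsInr f)

lemma IsAcyclic.addPendants (hH : H.IsAcyclic) : (H.addPendants f).IsAcyclic := by
  rw [isAcyclic_iff_forall_adj_isBridge] at hH ⊢
  have pendant_isBridge (w : W) : (H.addPendants f).IsBridge s(.inl w, .inr (f w)) := by
    refine not_reachable_of_neighborSet_left_eq_empty Sum.inl_ne_inr ?_
    ext (u | u) <;> simp +contextual [eq_comm]
  rintro (w | u) (w' | v) (h : (H.addPendants f).Adj _ _)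
  · exact h.elim
  · exact (h : f w = v) ▸ pendant_isBridge w
  · rw [Sym2.eq_swap]
    exact (h : f w' = u) ▸ pendant_isBridge w'
  · -- collapsing each pendant onto its attachment point turns walks avoiding the edge into walks
    -- of `H` avoiding it
    intro hreach
    refine hH h (reachable_iff_reflTransGen _ _ |>.mpr ?_)
    refine (reachable_iff_reflTransGen _ _ |>.mp hreach).lift' (Sum.elim f id) ?_
    rintro (a | a) (b | b) ⟨hab, hne⟩
    · exact hab.elim
    · exact (hab : f a = b) ▸ .refl
    · exact (hab : f b = a) ▸ .refl
    · exact .single ⟨hab, by simpa using hne⟩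

lemma IsTree.addPendants (hH : H.IsTree) : (H.addPendants f).IsTree :=
  ⟨hH.connected.addPendants, hH.isAcyclic.addPendants⟩

def innerEdgeLabel : Sym2 (W ⊕ V) → Bool :=
  Sym2.lift ⟨fun a b => a.isRight && b.isRight, fun _ _ => Bool.and_comm _ _⟩

@[simp] lemma innerEdgeLabel_mk (a b : W ⊕ V) :
    innerEdgeLabel s(a, b) = (a.isRight && b.isRight) := rfl

lemma fitchGraph_addPendants_adj (hH : H.IsTree) {x y : W} :
    (fitchGraph (H.addPendants f) innerEdgeLabel).Adj
        ⟨.inl x, isLeaf_addPendants_inl H f x⟩ ⟨.inl y, isLeaf_addPendants_inl H f y⟩ ↔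
      f x ≠ f y := by
  constructor
  · rintro ⟨hxy, p, hp, e, he, hlabel⟩ hfxy
    have hxy : x ≠ y := fun h => hxy (by subst h; rfl)
    let q : (H.addPendants f).Walk (.inl x) (.inl y) :=
      .cons (show (H.addPendants f).Adj _ (.inr (f x)) from rfl)
        (.cons (show (H.addPendants f).Adj _ (.inl y) from hfxy.symm) .nil)
    have hq : q.IsPath := by simp [q, hxy]
    obtain rfl : p = q := (hH.addPendants.existsUnique_path _ _).unique hp hq
    simp only [q, Walk.edges_cons, Walk.edges_nil, List.mem_cons, List.not_mem_nil,
      or_false] at he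
    rcases he with rfl | rfl <;> simp at hlabel
  · intro hfxy
    refine ⟨fun h => hfxy (by cases h; rfl), ?_⟩
    have hxy : x ≠ y := fun h => hfxy (congrArg f h)
    obtain ⟨q, hq⟩ := (hH.connected.preconnected (f x) (f y)).exists_isPath
    have hq' : (q.map (H.addPendantsInr f)).IsPath := hq.map Sum.inr_injective
    obtain ⟨e, he⟩ := q.edges.exists_mem_of_ne_nil (by simpa using q.not_nil_of_ne hfxy)
    let p : (H.addPendants f).Walk (.inl x) (.inl y) :=
      .cons (show (H.addPendants f).Adj (.inl x) (H.addPendantsInr f (f x)) from rfl)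
        ((q.map (H.addPendantsInr f)).concat
          (show (H.addPendants f).Adj (H.addPendantsInr f (f y)) (.inl y) from rfl))
    have hp : p.IsPath := by
      simp [p, Walk.concat_isPath_iff, hq', Walk.support_concat, hxy]
    have he' : e.map .inr ∈ p.edges := by
      simp only [p, Walk.edges_cons, Walk.edges_concat, List.concat_eq_append, Walk.edges_map]
      exact List.mem_cons_of_mem _ (List.mem_append_left _ (List.mem_map_of_mem he))
    refine ⟨p, hp, e.map .inr, he', ?_⟩
    induction e using Sym2.ind
    simp

variable (f) in
noncomputable def comapTopIsoFitchGraph (hH : H.IsTree)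
    (hleaf : ∀ v, ¬ (H.addPendants f).IsLeaf (.inr v)) :
    (⊤ : SimpleGraph V).comap f ≃g fitchGraph (H.addPendants f) innerEdgeLabel where
  toEquiv := .ofBijective (fun w => ⟨.inl w, isLeaf_addPendants_inl H f w⟩)
    ⟨fun _ _ h => Sum.inl_injective (congrArg Subtype.val h), by
      rintro ⟨w | v, hv⟩
      exacts [⟨w, rfl⟩, (hleaf v hv).elim]⟩
  map_rel_iff' := by
    intro x y
    exact fitchGraph_addPendants_adj hH

end SimpleGraph

open Function

universe u

theorem IsCompleteMultipartite'.exists_surjective_eq_comap_top {W : Type u} {G : SimpleGraph W}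
    (hG : IsCompleteMultipartite' G) :
    ∃ (ι : Type u) (π : W → ι), Surjective π ∧ G = (⊤ : SimpleGraph ι).comap π := by
  obtain ⟨P, hne, hpart, hadj⟩ := hG
  choose π hπ using fun x => (hpart x).exists
  refine ⟨P, fun x => ⟨π x, (hπ x).1⟩, ?_, ?_⟩
  · rintro ⟨p, hp⟩
    obtain ⟨x, hx⟩ := hne p hp
    exact ⟨x, Subtype.ext ((hpart x).unique (hπ x) ⟨hp, hx⟩)⟩
  · ext x y
    simp only [hadj, comap_adj, top_adj, ne_eq, Subtype.mk.injEq]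
    constructor
    · rintro ⟨p, hp, q, hq, hpq, hxp, hyq⟩ h
      rw [(hpart x).unique (hπ x) ⟨hp, hxp⟩, (hpart y).unique (hπ y) ⟨hq, hyq⟩] at h
      exact hpq h
    · exact fun h => ⟨π x, (hπ x).1, π y, (hπ y).1, h, (hπ x).2, (hπ y).2⟩

theorem isFitchGraph_comap_top {W ι : Type*} [Finite W] [Nontrivial W] {π : W → ι}
    (hπ : Surjective π) : IsFitchGraph ((⊤ : SimpleGraph ι).comap π) := by
  have := Finite.of_surjective π hπ
  -- the tree must live in `Type`, so first relabel `W` and `ι` by finite ordinals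
  obtain ⟨n, ⟨e⟩⟩ := Finite.exists_equiv_fin W
  obtain ⟨m, ⟨g⟩⟩ := Finite.exists_equiv_fin ι
  let π' : Fin n → Fin m := g ∘ π ∘ e.symm
  have hπ' : Surjective π' := g.surjective.comp (hπ.comp e.symm.surjective)
  have : Nontrivial (Fin n) := e.symm.nontrivial
  let relabel : (⊤ : SimpleGraph ι).comap π ≃g (⊤ : SimpleGraph (Fin m)).comap π' :=
    ⟨e, by simp [π']⟩
  let c : Fin m := π' (Classical.arbitrary _)
  have hT : ((starGraph c).addPendants π').IsTree := (isTree_starGraph c).addPendants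
  exact ⟨_, _, innerEdgeLabel, inferInstance, hT, ⟨relabel.trans <|
    comapTopIsoFitchGraph π' (isTree_starGraph c)
      (not_isLeaf_addPendants_inr (connected_starGraph c) hπ')⟩⟩

/-- every complete multipartite graph with at least two vertices is
an undirected Fitch graph. -/
theorem completeMultipartite_isFitch {W : Type*} [Fintype W] (G : SimpleGraph W)
    (hW : 2 ≤ Fintype.card W) (hG : IsCompleteMultipartite' G) :
    IsFitchGraph G := by
  obtain ⟨ι, π, hπ, rfl⟩ := hG.exists_surjective_eq_comap_top
  have : Nontrivial W := Fintype.one_lt_card_iff_nontrivial.mp hW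
  exact isFitchGraph_comap_top hπ
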